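/- Let d ≥ 4 and let 𝒴(d) ⊆ ℂ^{d+4} be as defined. Define φ : ℂ³ → ℂ^{d+4} by φ(x,y,z) = (q,Q,e,b_0,…,b_d) where q = 1, Q = −z, e = 0, b_{2k} = y·z^k and b_{2k+1} = x·z^k (for all admissible indices 0 ≤ 2k ≤ d and 0 ≤ 2k+1 ≤ d). Then: (i) for every (x,y,z) ∈ ℂ³ with x² − y²z = 1 one has φ(x,y,z) ∈ 𝒴(d); (ii) φ is injective on 𝒮 = {(x,y,z) | x² − y²z = 1}; (iii) φ(𝒮) = {(q,Q,e,b_0,…,b_d) ∈ 𝒴(d) | q = 1 and e = 0}. -/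
import Mathlib


/-- The sequence `Ψ_m(q,Q,e)`: `Ψ 0 = 1`, `Ψ 1 = e`, `Ψ m = e·Ψ (m−1) − qQ·Ψ (m−2)`. -/
noncomputable def PsiC (p e : ℂ) : ℕ → ℂ
  | 0 => 1
  | 1 => e
  | m + 2 => e * PsiC p e (m + 1) - p * PsiC p e m

/-- The `i`-th coordinate of a point of `ℂ^(d+4)`
(`i = 0` is `q`, `i = 1` is `Q`, `i = 2` is `e`, `i = 3+j` is `b_j` for `0 ≤ j ≤ d`). -/
noncomputable def coord {d : ℕ} (v : Fin (d + 4) → ℂ) (i : ℕ) : ℂ :=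
  if h : i < d + 4 then v ⟨i, h⟩ else 0

/-- The variety `𝒴(d) ⊆ ℂ^(d+4)`. -/
def Yset (d : ℕ) : Set (Fin (d + 4) → ℂ) :=
  {v | ∀ j k : ℕ, 1 ≤ j → j ≤ k → k ≤ d - 1 →
    coord v 2 * coord v (3 + j) =
        coord v 0 * coord v (3 + (j + 1)) + coord v 1 * coord v (3 + (j - 1)) ∧
    coord v (3 + j) * coord v (3 + k) - coord v (3 + (j - 1)) * coord v (3 + (k + 1)) =
      coord v 0 ^ (d - k - 1) * coord v 1 ^ (j - 1) *
        PsiC (coord v 0 * coord v 1) (coord v 2) (k - j)}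

/-- The map `φ : ℂ³ → ℂ^(d+4)`, `φ(x,y,z) = (q,Q,e,b_0,…,b_d)` with `q = 1`, `Q = −z`,
`e = 0`, `b_{2k} = y·z^k`, `b_{2k+1} = x·z^k`. -/
noncomputable def phi (d : ℕ) (p : ℂ × ℂ × ℂ) : Fin (d + 4) → ℂ := fun i =>
  if (i : ℕ) = 0 then 1
  else if (i : ℕ) = 1 then -p.2.2
  else if (i : ℕ) = 2 then 0
  else if ((i : ℕ) - 3) % 2 = 0 then p.2.1 * p.2.2 ^ (((i : ℕ) - 3) / 2)
  else p.1 * p.2.2 ^ (((i : ℕ) - 3) / 2)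

lemma PsiC_neg_even (z : ℂ) (m : ℕ) : PsiC (-z) 0 (2 * m) = z ^ m := by
  induction m with
  | zero => simp [PsiC]
  | succ n ih =>
    have h : 2 * (n + 1) = 2 * n + 2 := by ring
    rw [h]
    simp only [PsiC]
    rw [ih]; ring

lemma PsiC_neg_odd (z : ℂ) (m : ℕ) : PsiC (-z) 0 (2 * m + 1) = 0 := by
  induction m with
  | zero => simp [PsiC]
  | succ n ih =>
    have h : 2 * (n + 1) + 1 = (2 * n + 1) + 2 := by ring
    rw [h]
    simp only [PsiC]
    rw [ih]; ring

lemma coord_phi_zero (d : ℕ) (p : ℂ × ℂ × ℂ) : coord (phi d p) 0 = 1 := by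
  simp [coord, phi]

lemma coord_phi_one (d : ℕ) (p : ℂ × ℂ × ℂ) : coord (phi d p) 1 = -p.2.2 := by
  simp [coord, phi]

lemma coord_phi_two (d : ℕ) (p : ℂ × ℂ × ℂ) : coord (phi d p) 2 = 0 := by
  simp [coord, phi]

lemma coord_phi_even (d : ℕ) (x y z : ℂ) (t a : ℕ) (ht : t = 2 * a) (h : t ≤ d) :
    coord (phi d (x, y, z)) (3 + t) = y * z ^ a := by
  subst ht
  rw [coord, dif_pos (by omega)]
  simp only [phi, Fin.val_mk]
  rw [if_neg (by omega), if_neg (by omega), if_neg (by omega),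
    if_pos (show (3 + 2 * a - 3) % 2 = 0 by omega)]
  have h2 : (3 + 2 * a - 3) / 2 = a := by omega
  rw [h2]

lemma coord_phi_odd (d : ℕ) (x y z : ℂ) (t a : ℕ) (ht : t = 2 * a + 1) (h : t ≤ d) :
    coord (phi d (x, y, z)) (3 + t) = x * z ^ a := by
  subst ht
  rw [coord, dif_pos (by omega)]
  simp only [phi, Fin.val_mk]
  rw [if_neg (by omega), if_neg (by omega), if_neg (by omega),
    if_neg (show ¬ (3 + (2 * a + 1) - 3) % 2 = 0 by omega)]
  have h2 : (3 + (2 * a + 1) - 3) / 2 = a := by omega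
  rw [h2]

lemma coord_coe {d : ℕ} (v : Fin (d + 4) → ℂ) (i : Fin (d + 4)) : coord v (i : ℕ) = v i := by
  rw [coord, dif_pos i.isLt]

lemma phi_mem (d : ℕ) (hd : 4 ≤ d) (p : ℂ × ℂ × ℂ)
    (hp : p.1 ^ 2 - p.2.1 ^ 2 * p.2.2 = 1) : phi d p ∈ Yset d := by
  obtain ⟨x, y, z⟩ := p
  simp only at hp
  intro j k hj hjk hk
  obtain ⟨m, rfl⟩ : ∃ m, j = m + 1 := ⟨j - 1, by omega⟩
  obtain ⟨n, rfl⟩ : ∃ n, k = n + 1 := ⟨k - 1, by omega⟩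
  have hmn : m ≤ n := by omega
  have hnd : n + 2 ≤ d := by omega
  simp only [Nat.add_sub_cancel, Nat.succ_sub_succ, Nat.sub_zero]
  rw [coord_phi_zero, coord_phi_one, coord_phi_two]
  simp only [one_mul, one_pow]
  obtain ⟨a, rfl | rfl⟩ := Nat.even_or_odd' m
  · obtain ⟨b, rfl | rfl⟩ := Nat.even_or_odd' n
    · -- m = 2a, n = 2b, a ≤ b
      obtain ⟨c, rfl⟩ : ∃ c, b = a + c := ⟨b - a, by omega⟩
      rw [coord_phi_even d x y z (2 * a) a rfl (by omega),
        coord_phi_odd d x y z (2 * a + 1) a rfl (by omega),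
        coord_phi_even d x y z (2 * a + 1 + 1) (a + 1) (by ring) (by omega),
        coord_phi_odd d x y z (2 * (a + c) + 1) (a + c) rfl (by omega),
        coord_phi_even d x y z (2 * (a + c) + 1 + 1) (a + c + 1) (by ring) (by omega)]
      have e1 : 2 * (a + c) - 2 * a = 2 * c := by omega
      rw [e1, PsiC_neg_even, Even.neg_pow (even_two_mul a)]
      constructor
      · ring
      · linear_combination (z ^ (2 * a + c)) * hp
    · -- m = 2a, n = 2b+1
      rw [coord_phi_even d x y z (2 * a) a rfl (by omega),
        coord_phi_odd d x y z (2 * a + 1) a rfl (by omega),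
        coord_phi_even d x y z (2 * a + 1 + 1) (a + 1) (by ring) (by omega),
        coord_phi_even d x y z (2 * b + 1 + 1) (b + 1) (by ring) (by omega),
        coord_phi_odd d x y z (2 * b + 1 + 1 + 1) (b + 1) (by ring) (by omega)]
      obtain ⟨c, rfl⟩ : ∃ c, b = a + c := ⟨b - a, by omega⟩
      have e1 : 2 * (a + c) + 1 - 2 * a = 2 * c + 1 := by omega
      rw [e1, PsiC_neg_odd]
      constructor
      · ring
      · ring
  · obtain ⟨b, rfl | rfl⟩ := Nat.even_or_odd' n
    · -- m = 2a+1, n = 2b, a < b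
      obtain ⟨c, rfl⟩ : ∃ c, b = a + 1 + c := ⟨b - a - 1, by omega⟩
      rw [coord_phi_even d x y z (2 * a + 1 + 1) (a + 1) (by ring) (by omega),
        coord_phi_odd d x y z (2 * a + 1 + 1 + 1) (a + 1) (by ring) (by omega),
        coord_phi_odd d x y z (2 * a + 1) a rfl (by omega),
        coord_phi_odd d x y z (2 * (a + 1 + c) + 1) (a + 1 + c) rfl (by omega),
        coord_phi_even d x y z (2 * (a + 1 + c) + 1 + 1) (a + c + 2) (by ring) (by omega)]
      have e1 : 2 * (a + 1 + c) - (2 * a + 1) = 2 * c + 1 := by omega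
      rw [e1, PsiC_neg_odd]
      constructor
      · ring
      · ring
    · -- m = 2a+1, n = 2b+1, a ≤ b
      obtain ⟨c, rfl⟩ : ∃ c, b = a + c := ⟨b - a, by omega⟩
      rw [coord_phi_even d x y z (2 * a + 1 + 1) (a + 1) (by ring) (by omega),
        coord_phi_odd d x y z (2 * a + 1 + 1 + 1) (a + 1) (by ring) (by omega),
        coord_phi_odd d x y z (2 * a + 1) a rfl (by omega),
        coord_phi_even d x y z (2 * (a + c) + 1 + 1) (a + c + 1) (by ring) (by omega),
        coord_phi_odd d x y z (2 * (a + c) + 1 + 1 + 1) (a + c + 1) (by ring) (by omega)]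
      have e1 : 2 * (a + c) + 1 - (2 * a + 1) = 2 * c := by omega
      rw [e1, PsiC_neg_even, Odd.neg_pow (odd_two_mul_add_one a)]
      constructor
      · ring
      · linear_combination (- z ^ (2 * a + c + 1)) * hp

lemma phi_surj (d : ℕ) (hd : 4 ≤ d) (v : Fin (d + 4) → ℂ) (hv : v ∈ Yset d)
    (h0 : coord v 0 = 1) (h2 : coord v 2 = 0) :
    ∃ p : ℂ × ℂ × ℂ, p.1 ^ 2 - p.2.1 ^ 2 * p.2.2 = 1 ∧ phi d p = v := by
  set z : ℂ := -coord v 1 with hz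
  set y : ℂ := coord v (3 + 0) with hy
  set x : ℂ := coord v (3 + 1) with hx
  have hrec : ∀ j : ℕ, 1 ≤ j → j ≤ d - 1 →
      coord v (3 + (j + 1)) = z * coord v (3 + (j - 1)) := by
    intro j h1 h2'
    obtain ⟨heq, -⟩ := hv j j h1 le_rfl h2'
    rw [h0, h2] at heq
    rw [hz]
    linear_combination -heq
  have key : ∀ t : ℕ, t ≤ d →
      coord v (3 + t) = if t % 2 = 0 then y * z ^ (t / 2) else x * z ^ (t / 2) := by
    intro t
    induction t using Nat.strong_induction_on with
    | _ t ih =>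
      match t with
      | 0 => intro _; simp [hy]
      | 1 => intro _; simp [hx]
      | (s + 2) =>
        intro hs
        have h := hrec (s + 1) (by omega) (by omega)
        have e0 : s + 1 + 1 = s + 2 := rfl
        have e1 : s + 1 - 1 = s := rfl
        rw [e0, e1] at h
        have hih := ih s (by omega) (by omega)
        rw [h, hih]
        have hm : (s + 2) % 2 = s % 2 := by omega
        have hd2 : (s + 2) / 2 = s / 2 + 1 := by omega
        rw [hm, hd2]
        split <;> ring
  have hcon : x ^ 2 - y ^ 2 * z = 1 := by
    obtain ⟨-, heq⟩ := hv 1 1 le_rfl le_rfl (by omega)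
    rw [h0, h2] at heq
    have e2 : coord v (3 + (1 + 1)) = y * z := by
      have := key 2 (by omega)
      norm_num at this
      rw [show (3 + (1 + 1) : ℕ) = 3 + 2 from rfl, this]
    rw [e2] at heq
    simp only [PsiC, one_pow, pow_zero, one_mul, mul_one, Nat.sub_self] at heq
    rw [show (3 + (1 - 1) : ℕ) = 3 + 0 from rfl] at heq
    rw [← hx, ← hy] at heq
    linear_combination heq
  refine ⟨(x, y, z), hcon, ?_⟩
  funext i
  have hi := i.isLt
  rcases Nat.lt_or_ge (i : ℕ) 3 with h3 | h3
  · have : (i : ℕ) = 0 ∨ (i : ℕ) = 1 ∨ (i : ℕ) = 2 := by omega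
    rcases this with h | h | h
    · rw [← coord_coe v i, h, h0]
      simp [phi, h]
    · rw [← coord_coe v i, h]
      simp [phi, h, hz]
    · rw [← coord_coe v i, h, h2]
      simp [phi, h]
  · obtain ⟨t, ht, htd⟩ : ∃ t, (i : ℕ) = 3 + t ∧ t ≤ d := ⟨(i : ℕ) - 3, by omega, by omega⟩
    rw [← coord_coe v i, ht, key t htd]
    simp only [phi, ht]
    rw [if_neg (by omega), if_neg (by omega), if_neg (by omega)]
    rw [show (3 + t - 3 : ℕ) = t from by omega]

/-- For `d ≥ 4`: (i) `φ` maps `𝒮 = {x² − y²z = 1}` into `𝒴(d)`;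
(ii) `φ` is injective on `𝒮`; (iii) the image `φ(𝒮)` is exactly the set of points of
`𝒴(d)` with `q = 1` and `e = 0`. -/
theorem stmt_12 (d : ℕ) (hd : 4 ≤ d) :
    (∀ p : ℂ × ℂ × ℂ, p.1 ^ 2 - p.2.1 ^ 2 * p.2.2 = 1 → phi d p ∈ Yset d) ∧
    Set.InjOn (phi d) {p : ℂ × ℂ × ℂ | p.1 ^ 2 - p.2.1 ^ 2 * p.2.2 = 1} ∧
    phi d '' {p : ℂ × ℂ × ℂ | p.1 ^ 2 - p.2.1 ^ 2 * p.2.2 = 1} =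
      {v | v ∈ Yset d ∧ coord v 0 = 1 ∧ coord v 2 = 0} := by
  refine ⟨fun p hp => phi_mem d hd p hp, ?_, ?_⟩
  · intro p1 _ p2 _ heq
    have e1 : phi d p1 ⟨1, by omega⟩ = phi d p2 ⟨1, by omega⟩ := by rw [heq]
    have e3 : phi d p1 ⟨3, by omega⟩ = phi d p2 ⟨3, by omega⟩ := by rw [heq]
    have e4 : phi d p1 ⟨4, by omega⟩ = phi d p2 ⟨4, by omega⟩ := by rw [heq]
    simp only [phi, Fin.val_mk] at e1 e3 e4
    norm_num at e1 e3 e4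
    obtain ⟨x1, y1, z1⟩ := p1
    obtain ⟨x2, y2, z2⟩ := p2
    simp only at e1 e3 e4
    simp [Prod.ext_iff, e1, e3, e4]
  · ext v
    constructor
    · rintro ⟨p, hp, rfl⟩
      exact ⟨phi_mem d hd p hp, coord_phi_zero d p, coord_phi_two d p⟩
    · rintro ⟨hv, h0, h2⟩
      obtain ⟨p, hp, hpv⟩ := phi_surj d hd v hv h0 h2
      exact ⟨p, hp, hpv⟩
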